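/- Let m,n be positive integers, γ ∈ [0,1)^m, and suppose A ∈ [0,1)^{m×n} satisfies: for some κ > 1 and all sufficiently large T ∈ ℕ there exists q ∈ ℤ^n with 1 ≤ ‖q‖^n ≤ T and ⟨Aq − γ⟩^m < T^{−κ}. Then the series ∑_{t=1}^∞ t^{n-1} · (min_{1 ≤ ‖q‖ ≤ t} ⟨Aq − γ⟩^m) converges. -/

import Mathlib

/-!
Applying the Dirichlet property with `T = t ^ n` produces a `q` with `1 ≤ ‖q‖ ≤ t` and
`⟨Aq - γ⟩ ^ m < t ^ (-nκ)`, so the `t`-th term of the series is at most `t ^ (n - 1 - nκ)`.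
Since `nκ > n`, this is a convergent `p`-series.
-/

open Filter

/-- The supremum norm of an integer vector, as a natural number. -/
def znn {n : ℕ} (q : Fin n → ℤ) : ℕ := Finset.univ.sup fun i => (q i).natAbs

/-- Supremum-norm distance of `y ∈ ℝ^m` to the integer lattice `ℤ^m`. -/
noncomputable def dz {m : ℕ} (y : Fin m → ℝ) : ℝ := ⨅ p : Fin m → ℤ, ‖y - fun i => (p i : ℝ)‖

/-- `⟨Aq - γ⟩`, the approximation error. -/
noncomputable def approxErr {m n : ℕ} (A : Matrix (Fin m) (Fin n) ℝ) (γ : Fin m → ℝ)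
    (q : Fin n → ℤ) : ℝ := dz (A.mulVec (fun i => (q i : ℝ)) - γ)

/-- `min_{q ∈ ℤ^n, l ≤ ‖q‖ ≤ t} ⟨Aq - γ⟩^m`. -/
noncomputable def minErr {m n : ℕ} (A : Matrix (Fin m) (Fin n) ℝ) (γ : Fin m → ℝ)
    (l t : ℕ) : ℝ :=
  sInf {x | ∃ q : Fin n → ℤ, l ≤ znn q ∧ znn q ≤ t ∧ x = approxErr A γ q ^ m}

section MinErr

variable {m n : ℕ} (A : Matrix (Fin m) (Fin n) ℝ) (γ : Fin m → ℝ)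

lemma approxErr_nonneg (q : Fin n → ℤ) : 0 ≤ approxErr A γ q :=
  Real.iInf_nonneg fun _ => norm_nonneg _

lemma minErr_nonneg (l t : ℕ) : 0 ≤ minErr A γ l t := by
  apply Real.sInf_nonneg
  rintro x ⟨q, -, -, rfl⟩
  exact pow_nonneg (approxErr_nonneg A γ q) m

lemma minErr_le {l t : ℕ} {q : Fin n → ℤ} (hl : l ≤ znn q) (ht : znn q ≤ t) :
    minErr A γ l t ≤ approxErr A γ q ^ m := by
  refine csInf_le ⟨0, ?_⟩ ⟨q, hl, ht, rfl⟩
  rintro x ⟨q', -, -, rfl⟩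
  exact pow_nonneg (approxErr_nonneg A γ q') m

lemma minErr_le_rpow_of_dirichlet {κ : ℝ} {T₀ : ℕ} (hn : 0 < n)
    (hdir : ∀ T : ℕ, T₀ ≤ T → ∃ q : Fin n → ℤ,
      1 ≤ znn q ∧ (znn q : ℝ) ^ n ≤ (T : ℝ) ∧ approxErr A γ q ^ m < (T : ℝ) ^ (-κ))
    {t : ℕ} (ht : T₀ ≤ t) :
    minErr A γ 1 t ≤ (t : ℝ) ^ (-(n * κ)) := by
  obtain ⟨q, hq1, hqT, hqerr⟩ := hdir (t ^ n) (ht.trans (Nat.le_self_pow hn.ne' t))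
  have hqt : znn q ≤ t := by
    push_cast at hqT
    exact_mod_cast (pow_le_pow_iff_left₀ (by positivity) (by positivity) hn.ne').mp hqT
  calc minErr A γ 1 t ≤ approxErr A γ q ^ m := minErr_le A γ hq1 hqt
    _ ≤ ((t ^ n : ℕ) : ℝ) ^ (-κ) := hqerr.le
    _ = (t : ℝ) ^ (-(n * κ)) := by
      rw [Nat.cast_pow, ← Real.rpow_natCast, ← Real.rpow_mul (Nat.cast_nonneg t)]
      ring_nf

end MinErr

theorem dirichlet_implies_S_converges_general (m n : ℕ) (hn : 0 < n)
    (A : Matrix (Fin m) (Fin n) ℝ) (γ : Fin m → ℝ)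
    (κ : ℝ) (hκ : 1 < κ)
    (hdir : ∃ T₀ : ℕ, ∀ T : ℕ, T₀ ≤ T → ∃ q : Fin n → ℤ,
      1 ≤ znn q ∧ (znn q : ℝ) ^ n ≤ (T : ℝ) ∧ approxErr A γ q ^ m < (T : ℝ) ^ (-κ)) :
    Summable (fun t : ℕ => if 1 ≤ t then (t : ℝ) ^ (n - 1) * minErr A γ 1 t else 0) := by
  obtain ⟨T₀, hT⟩ := hdir
  have hexp : ((n - 1 : ℕ) : ℝ) - n * κ < -1 := by
    have hn1 : (1 : ℝ) ≤ n := by exact_mod_cast hn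
    rw [Nat.cast_sub hn, Nat.cast_one]
    nlinarith
  refine (Real.summable_nat_rpow.mpr hexp).of_norm_bounded_eventually_nat ?_
  filter_upwards [eventually_ge_atTop (max T₀ 1)] with t ht
  have htpos : (0 : ℝ) < t := by exact_mod_cast le_of_max_le_right ht
  rw [if_pos (le_of_max_le_right ht),
    Real.norm_of_nonneg (mul_nonneg (by positivity) (minErr_nonneg A γ 1 t))]
  calc (t : ℝ) ^ (n - 1) * minErr A γ 1 t
      ≤ (t : ℝ) ^ (n - 1) * (t : ℝ) ^ (-(n * κ)) := by
        gcongr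
        exact minErr_le_rpow_of_dirichlet A γ hn hT (le_of_max_le_left ht)
    _ = (t : ℝ) ^ (((n - 1 : ℕ) : ℝ) - n * κ) := by
        rw [← Real.rpow_natCast, ← Real.rpow_add htpos, sub_eq_add_neg]

theorem dirichlet_implies_S_converges (m n : ℕ) (hm : 0 < m) (hn : 0 < n)
    (A : Matrix (Fin m) (Fin n) ℝ) (γ : Fin m → ℝ)
    (hA : ∀ i j, 0 ≤ A i j ∧ A i j < 1) (hγ : ∀ i, 0 ≤ γ i ∧ γ i < 1)
    (κ : ℝ) (hκ : 1 < κ)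
    (hdir : ∃ T₀ : ℕ, ∀ T : ℕ, T₀ ≤ T → ∃ q : Fin n → ℤ,
      1 ≤ znn q ∧ (znn q : ℝ) ^ n ≤ (T : ℝ) ∧ approxErr A γ q ^ m < (T : ℝ) ^ (-κ)) :
    Summable (fun t : ℕ => if 1 ≤ t then (t : ℝ) ^ (n - 1) * minErr A γ 1 t else 0) :=
  dirichlet_implies_S_converges_general m n hn A γ κ hκ hdir
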